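/- arXiv:2605.25483 — 4 statements merged into one kernel-verified Lean document; each statement's English description precedes it below -/
import Mathlib

section
/- Suppose θ^j = θ^j_s − B^j and θ^k = θ^k_s − B^k, with B^j ∈ [ν^j_l, ν^j_u], B^k ∈ [ν^k_l, ν^k_u], and B^j = ρ·B^k for some ρ ∈ [ρ_l, ρ_u]. Define C := {(ρ_l − 1)ν^k_l, (ρ_u − 1)ν^k_l, (ρ_l − 1)ν^k_u, (ρ_u − 1)ν^k_u}, c_l := min C, c_u := max C. Then: (i) θ^j ∈ [θ^j_s − ν^j_u, θ^j_s − ν^j_l]; (ii) θ^k ∈ [θ^k_s − ν^k_u, θ^k_s − ν^k_l]; and (iii) θ^j − θ^k ∈ [(θ^j_s − θ^k_s) − c_u, (θ^j_s − θ^k_s) − c_l]. That is, the pair (θ^j, θ^k) belongs to the joint identified set J^{jk}. -/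
lemma corner_lb (x y a b c d : ℝ) (hax : a ≤ x) (hxb : x ≤ b) (hcy : c ≤ y) (hyd : y ≤ d) :
    min (min (a*c) (b*c)) (min (a*d) (b*d)) ≤ x * y := by
  rcases le_total 0 x with hx | hx
  · rcases le_total 0 c with hc | hc
    · refine le_trans (le_trans (min_le_left _ _) (min_le_left _ _)) ?_
      nlinarith [mul_nonneg hx (sub_nonneg.2 hcy), mul_nonneg hc (sub_nonneg.2 hax)]
    · refine le_trans (le_trans (min_le_left _ _) (min_le_right _ _)) ?_
      nlinarith [mul_nonneg hx (sub_nonneg.2 hcy), mul_nonneg (neg_nonneg.2 hc) (sub_nonneg.2 hxb)]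
  · rcases le_total 0 d with hd | hd
    · refine le_trans (le_trans (min_le_right _ _) (min_le_left _ _)) ?_
      nlinarith [mul_nonneg (neg_nonneg.2 hx) (sub_nonneg.2 hyd), mul_nonneg hd (sub_nonneg.2 hax)]
    · refine le_trans (le_trans (min_le_right _ _) (min_le_right _ _)) ?_
      nlinarith [mul_nonneg (neg_nonneg.2 hx) (sub_nonneg.2 hyd),
        mul_nonneg (neg_nonneg.2 hd) (sub_nonneg.2 hxb)]

lemma corner_ub (x y a b c d : ℝ) (hax : a ≤ x) (hxb : x ≤ b) (hcy : c ≤ y) (hyd : y ≤ d) :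
    x * y ≤ max (max (a*c) (b*c)) (max (a*d) (b*d)) := by
  have h := corner_lb x (-y) a b (-d) (-c) hax hxb (by linarith) (by linarith)
  have e1 : a * -d = -(a*d) := by ring
  have e2 : b * -d = -(b*d) := by ring
  have e3 : a * -c = -(a*c) := by ring
  have e4 : b * -c = -(b*c) := by ring
  rw [e1, e2, e3, e4] at h
  have := h.trans (le_of_eq (by ring : x * -y = -(x*y)))
  simp only [min_neg_neg, neg_le_neg_iff] at this
  calc x*y ≤ max (max (a*d) (b*d)) (max (a*c) (b*c)) := this
    _ = max (max (a*c) (b*c)) (max (a*d) (b*d)) := max_comm _ _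

/-- Joint identified set for two settings. -/
theorem joint_identified_set_two_settings
    (θj θk θjs θks Bj Bk ρ νjl νju νkl νku ρl ρu : ℝ)
    (hνj : νjl ≤ νju) (hνk : νkl ≤ νku) (hρb : ρl ≤ ρu)
    (hθj : θj = θjs - Bj) (hθk : θk = θks - Bk)
    (hBjl : νjl ≤ Bj) (hBju : Bj ≤ νju)
    (hBkl : νkl ≤ Bk) (hBku : Bk ≤ νku)
    (hprop : Bj = ρ * Bk)
    (hρl : ρl ≤ ρ) (hρu : ρ ≤ ρu)
    (cl cu : ℝ)
    (hcl : cl = min (min ((ρl - 1) * νkl) ((ρu - 1) * νkl))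
                   (min ((ρl - 1) * νku) ((ρu - 1) * νku)))
    (hcu : cu = max (max ((ρl - 1) * νkl) ((ρu - 1) * νkl))
                   (max ((ρl - 1) * νku) ((ρu - 1) * νku))) :
    θj ∈ Set.Icc (θjs - νju) (θjs - νjl) ∧
    θk ∈ Set.Icc (θks - νku) (θks - νkl) ∧
    θj - θk ∈ Set.Icc ((θjs - θks) - cu) ((θjs - θks) - cl) := by
  have hlb := corner_lb (ρ - 1) Bk (ρl - 1) (ρu - 1) νkl νku
    (by linarith) (by linarith) hBkl hBku
  have hub := corner_ub (ρ - 1) Bk (ρl - 1) (ρu - 1) νkl νku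
    (by linarith) (by linarith) hBkl hBku
  rw [← hcl] at hlb
  rw [← hcu] at hub
  have hx : (ρ - 1) * Bk = ρ * Bk - Bk := by ring
  rw [hx] at hlb hub
  exact ⟨⟨by linarith, by linarith⟩, ⟨by linarith, by linarith⟩,
    Set.mem_Icc.2 ⟨by linarith, by linarith⟩⟩
end

section
/- Let d_l := (θ^j_s − θ^k_s) − c_u and d_u := (θ^j_s − θ^k_s) − c_l with c_l ≤ c_u. Then a real number x satisfies (x ∈ [θ^j_s − ν^j_u, θ^j_s − ν^j_l] and there exists y ∈ [θ^k_s − ν^k_u, θ^k_s − ν^k_l] with x − y ∈ [d_l, d_u]) if and only if x ∈ [θ^j_s − ν^j_u, θ^j_s − ν^j_l] ∩ [θ^j_s − ν^k_u − c_u, θ^j_s − ν^k_l − c_l]. That is, the projection of the joint identified set J^{jk} onto the j-th coordinate equals I^j ∩ [θ^j_s − ν^k_u − c_u, θ^j_s − ν^k_l − c_l]. -/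
/-- Projection of the joint identified set onto the j-th
coordinate equals I^j ∩ [θjs − νku − cu, θjs − νkl − cl]. -/
theorem projection_joint_set
    (θjs θks νjl νju νkl νku cl cu : ℝ)
    (hνj : νjl ≤ νju) (hνk : νkl ≤ νku) (hc : cl ≤ cu)
    (dl du : ℝ)
    (hdl : dl = (θjs - θks) - cu) (hdu : du = (θjs - θks) - cl)
    (x : ℝ) :
    (x ∈ Set.Icc (θjs - νju) (θjs - νjl) ∧
      ∃ y ∈ Set.Icc (θks - νku) (θks - νkl), x - y ∈ Set.Icc dl du) ↔
    x ∈ Set.Icc (θjs - νju) (θjs - νjl) ∩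
        Set.Icc (θjs - νku - cu) (θjs - νkl - cl) := by
  subst hdl hdu
  simp only [Set.mem_Icc, Set.mem_inter_iff]
  constructor
  · rintro ⟨hx, y, ⟨h1, h2⟩, h3, h4⟩
    refine ⟨hx, by linarith, by linarith⟩
  · rintro ⟨hx, h1, h2⟩
    refine ⟨hx, max (θks - νku) (x - (θjs - θks - cl)), ⟨le_max_left _ _, ?_⟩, ?_, ?_⟩
    · exact max_le (by linarith) (by linarith)
    · rcases max_cases (θks - νku) (x - (θjs - θks - cl)) with ⟨h, _⟩ | ⟨h, _⟩ <;>
        rw [h] <;> linarith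
    · exact sub_le_iff_le_add.2 (by linarith [le_max_right (θks - νku) (x - (θjs - θks - cl))])
end

section
/- Let proj_j(J^{jk}) := [θ^j_s − ν^j_u, θ^j_s − ν^j_l] ∩ [θ^j_s − ν^k_u − c_u, θ^j_s − ν^k_l − c_l] with c_l ≤ c_u, ν^j_l ≤ ν^j_u, ν^k_l ≤ ν^k_u, and assume proj_j(J^{jk}) is nonempty. Then proj_j(J^{jk}) is a strict subset of [θ^j_s − ν^j_u, θ^j_s − ν^j_l] if and only if at least one of the following holds: (1) ν^k_u + c_u < ν^j_u (the lower bound of θ^j is raised), or (2) ν^k_l + c_l > ν^j_l (the upper bound of θ^j is lowered). -/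
/-- Marginal sharpening conditions. The marginal identified set
proj_j(J) = I^j ∩ [θjs − νku − cu, θjs − νkl − cl] (assumed nonempty) is a
strict subset of I^j iff νku + cu < νju or νkl + cl > νjl. -/
theorem marginal_sharpening_conditions
    (θjs νjl νju νkl νku cl cu : ℝ)
    (hνj : νjl ≤ νju) (hνk : νkl ≤ νku) (hc : cl ≤ cu)
    (hne : (Set.Icc (θjs - νju) (θjs - νjl) ∩
            Set.Icc (θjs - νku - cu) (θjs - νkl - cl)).Nonempty) :
    (Set.Icc (θjs - νju) (θjs - νjl) ∩
      Set.Icc (θjs - νku - cu) (θjs - νkl - cl)) ⊂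
      Set.Icc (θjs - νju) (θjs - νjl) ↔
    (νku + cu < νju ∨ νkl + cl > νjl) := by
  obtain ⟨x, hx1, hx2⟩ := hne
  rw [Set.mem_Icc] at hx1 hx2
  constructor
  · intro h
    by_contra hcon
    push_neg at hcon
    obtain ⟨h1, h2⟩ := hcon
    have e1 : θjs - νku - cu ≤ θjs - νju := by linarith
    have e2 : θjs - νjl ≤ θjs - νkl - cl := by linarith
    have : Set.Icc (θjs - νju) (θjs - νjl) ⊆
        Set.Icc (θjs - νku - cu) (θjs - νkl - cl) :=
      Set.Icc_subset_Icc e1 e2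
    exact h.not_subset (fun y hy => ⟨hy, this hy⟩)
  · intro h
    constructor
    · exact Set.inter_subset_left
    · intro hsub
      rcases h with h | h
      · have hmem : θjs - νju ∈ Set.Icc (θjs - νju) (θjs - νjl) :=
          ⟨le_refl _, by linarith⟩
        have := (hsub hmem).2
        rw [Set.mem_Icc] at this
        linarith [this.1]
      · have hmem : θjs - νjl ∈ Set.Icc (θjs - νju) (θjs - νjl) :=
          ⟨by linarith, le_refl _⟩
        have := (hsub hmem).2
        rw [Set.mem_Icc] at this
        linarith [this.2]
end

section
/- Let K ≥ 1 and suppose for each setting i ∈ {1,…,K} that θ^i = θ^i_s − B^i with B^i ∈ [ν^i_l, ν^i_u], and for each ordered pair (j,k) with j ≠ k that B^j = ρ^{jk}·B^k with ρ^{jk} ∈ [ρ^{jk}_l, ρ^{jk}_u]. For each pair define c^{jk}_l := min C^{jk} and c^{jk}_u := max C^{jk} where C^{jk} := {(ρ^{jk}_l − 1)ν^k_l, (ρ^{jk}_u − 1)ν^k_l, (ρ^{jk}_l − 1)ν^k_u, (ρ^{jk}_u − 1)ν^k_u}. Then the vector (θ^1, …, θ^K) belongs to the polytope J := {(x^1,…,x^K)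 : x^i ∈ [θ^i_s − ν^i_u, θ^i_s − ν^i_l] for all i, and x^j − x^k ∈ [(θ^j_s − θ^k_s) − c^{jk}_u, (θ^j_s − θ^k_s) − c^{jk}_l] for all pairs (j,k) with j ≠ k}. -/
lemma corner_bounds (a b c d x y : ℝ) (hax : a ≤ x) (hxb : x ≤ b)
    (hcy : c ≤ y) (hyd : y ≤ d) :
    min (min (a*c) (b*c)) (min (a*d) (b*d)) ≤ x*y ∧
    x*y ≤ max (max (a*c) (b*c)) (max (a*d) (b*d)) := by
  have hub : x*y ≤ max (a*y) (b*y) := by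
    rcases le_total 0 y with h | h
    · exact le_max_of_le_right (mul_le_mul_of_nonneg_right hxb h)
    · exact le_max_of_le_left (mul_le_mul_of_nonpos_right hax h)
  have hlb : min (a*y) (b*y) ≤ x*y := by
    rcases le_total 0 y with h | h
    · exact min_le_of_left_le (mul_le_mul_of_nonneg_right hax h)
    · exact min_le_of_right_le (mul_le_mul_of_nonpos_right hxb h)
  have hau : a*y ≤ max (a*c) (a*d) := by
    rcases le_total 0 a with h | h
    · exact le_max_of_le_right (mul_le_mul_of_nonneg_left hyd h)
    · exact le_max_of_le_left (mul_le_mul_of_nonpos_left hcy h)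
  have hbu : b*y ≤ max (b*c) (b*d) := by
    rcases le_total 0 b with h | h
    · exact le_max_of_le_right (mul_le_mul_of_nonneg_left hyd h)
    · exact le_max_of_le_left (mul_le_mul_of_nonpos_left hcy h)
  have hal : min (a*c) (a*d) ≤ a*y := by
    rcases le_total 0 a with h | h
    · exact min_le_of_left_le (mul_le_mul_of_nonneg_left hcy h)
    · exact min_le_of_right_le (mul_le_mul_of_nonpos_left hyd h)
  have hbl : min (b*c) (b*d) ≤ b*y := by
    rcases le_total 0 b with h | h
    · exact min_le_of_left_le (mul_le_mul_of_nonneg_left hcy h)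
    · exact min_le_of_right_le (mul_le_mul_of_nonpos_left hyd h)
  constructor
  · calc min (min (a*c) (b*c)) (min (a*d) (b*d))
        ≤ min (a*y) (b*y) := by
          apply le_min
          · exact (min_le_min (min_le_left _ _) (min_le_left _ _)).trans hal
          · exact (min_le_min (min_le_right _ _) (min_le_right _ _)).trans hbl
      _ ≤ x*y := hlb
  · calc x*y ≤ max (a*y) (b*y) := hub
      _ ≤ max (max (a*c) (b*c)) (max (a*d) (b*d)) := by
          apply max_le
          · exact hau.trans (max_le_max (le_max_left _ _) (le_max_left _ _))
          · exact hbu.trans (max_le_max (le_max_right _ _) (le_max_right _ _))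

/-- K-setting joint identified set. The true vector of effects
belongs to the polytope defined by the individual interval constraints and
the pairwise difference constraints. -/
theorem k_setting_joint_identified_set
    (K : ℕ) (hK : 1 ≤ K)
    (θ θs B νl νu : Fin K → ℝ)
    (ρ ρl ρu : Fin K → Fin K → ℝ)
    (hν : ∀ i, νl i ≤ νu i)
    (hρb : ∀ j k, j ≠ k → ρl j k ≤ ρu j k)
    (hθ : ∀ i, θ i = θs i - B i)
    (hB : ∀ i, B i ∈ Set.Icc (νl i) (νu i))
    (hprop : ∀ j k, j ≠ k → B j = ρ j k * B k)
    (hρ : ∀ j k, j ≠ k → ρ j k ∈ Set.Icc (ρl j k) (ρu j k))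
    (cl cu : Fin K → Fin K → ℝ)
    (hcl : ∀ j k, j ≠ k →
      cl j k = min (min ((ρl j k - 1) * νl k) ((ρu j k - 1) * νl k))
                   (min ((ρl j k - 1) * νu k) ((ρu j k - 1) * νu k)))
    (hcu : ∀ j k, j ≠ k →
      cu j k = max (max ((ρl j k - 1) * νl k) ((ρu j k - 1) * νl k))
                   (max ((ρl j k - 1) * νu k) ((ρu j k - 1) * νu k))) :
    θ ∈ {x : Fin K → ℝ |
      (∀ i, x i ∈ Set.Icc (θs i - νu i) (θs i - νl i)) ∧
      (∀ j k, j ≠ k →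
        x j - x k ∈ Set.Icc ((θs j - θs k) - cu j k) ((θs j - θs k) - cl j k))} := by
  constructor
  · intro i
    obtain ⟨h1, h2⟩ := hB i
    rw [hθ i]
    exact ⟨by linarith, by linarith⟩
  · intro j k hjk
    obtain ⟨h1, h2⟩ := hB k
    obtain ⟨h3, h4⟩ := hρ j k hjk
    have hc := corner_bounds (ρl j k - 1) (ρu j k - 1) (νl k) (νu k)
      (ρ j k - 1) (B k) (by linarith) (by linarith) h1 h2
    rw [hθ j, hθ k, hprop j k hjk, hcl j k hjk, hcu j k hjk]
    constructor <;> nlinarith [hc.1, hc.2]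
end
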